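/- Let (Ω, 𝓕, ℙ) be a probability space, let X : Ω → ℝ be a random variable with ℙ(X ≠ 0) > 0, let U : ℝ → ℝ be nondecreasing with U(x) → ∞ as x → ∞, and let r₀ ∈ ℝ. Then the supremum, over all measurable functions θ : Ω → ℝ, of the expected utility E[U(r₀ + θ·X)] (each such expectation being well defined in (−∞, ∞] whenever the integrand is bounded below) equals +∞. Consequently, if this supremum is finite then X = 0 almost surely. -/

import Mathlib

/-!
Take the position `θ = (y - r₀) / X`: it moves the wealth to `y` wherever `X ≠ 0` and leaves
it at `r₀` elsewhere (as `c / 0 = 0`), so the expected utility is `p U(y) + (1 - p) U(r₀)` with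
`p = ℙ(X ≠ 0) > 0`. Since `U` is unbounded above, choosing `y` large makes this exceed any level.
-/

open MeasureTheory Filter

lemma le_mul_add_one_sub_mul {p u v M : ℝ} (hp : 0 < p) (hp1 : p ≤ 1)
    (hu : (M + |v|) / p ≤ u) : M ≤ p * u + (1 - p) * v := by
  have hpu : M + |v| ≤ p * u := by rwa [div_le_iff₀' hp] at hu
  have hv : -|v| ≤ (1 - p) * v := by nlinarith [abs_nonneg v, neg_abs_le v]
  linarith

lemma comp_add_div_mul_eq_piecewise {α : Type*} (g : ℝ → ℝ) (a b : ℝ) (X : α → ℝ) :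
    (fun x => g (a + (b - a) / X x * X x)) =
      {x | X x ≠ 0}.piecewise (fun _ => g b) (fun _ => g a) := by
  funext x
  by_cases hX : X x = 0 <;> simp [hX]

section

variable {Ω : Type*} [MeasurableSpace Ω] (μ : Measure Ω) [IsFiniteMeasure μ] {s : Set Ω}
  [DecidablePred (· ∈ s)]

lemma integrable_piecewise_const (hs : MeasurableSet s) (u v : ℝ) :
    Integrable (s.piecewise (fun _ => u) (fun _ => v)) μ :=
  Integrable.piecewise hs (integrable_const u).integrableOn (integrable_const v).integrableOn

lemma integral_piecewise_const (hs : MeasurableSet s) (u v : ℝ) :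
    ∫ ω, s.piecewise (fun _ => u) (fun _ => v) ω ∂μ = μ.real s * u + μ.real sᶜ * v := by
  rw [integral_piecewise hs (integrable_const u).integrableOn (integrable_const v).integrableOn,
    setIntegral_const, setIntegral_const, smul_eq_mul, smul_eq_mul]

end

open MeasureTheory Filter in
theorem stmt_3_general {Ω : Type*} [MeasurableSpace Ω] (ℙ : Measure Ω) [IsProbabilityMeasure ℙ]
    (X : Ω → ℝ) (hXm : Measurable X) (hXne : 0 < ℙ {ω | X ω ≠ 0})
    (U : ℝ → ℝ) (hUtop : Tendsto U atTop atTop) (r₀ : ℝ) :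
    ∀ M : ℝ, ∃ θ : Ω → ℝ, Measurable θ ∧
      Integrable (fun ω => U (r₀ + θ ω * X ω)) ℙ ∧
      M ≤ ∫ ω, U (r₀ + θ ω * X ω) ∂ℙ := by
  intro M
  set A := {ω | X ω ≠ 0}
  have hA : MeasurableSet A := (hXm (measurableSet_singleton 0)).compl
  have hp : 0 < ℙ.real A := ENNReal.toReal_pos hXne.ne' (measure_ne_top _ _)
  obtain ⟨y, hy⟩ := (hUtop.eventually_ge_atTop ((M + |U r₀|) / ℙ.real A)).exists
  refine ⟨fun ω => (y - r₀) / X ω, measurable_const.div hXm, ?_, ?_⟩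
  · rw [comp_add_div_mul_eq_piecewise]
    exact integrable_piecewise_const ℙ hA _ _
  · rw [comp_add_div_mul_eq_piecewise, integral_piecewise_const ℙ hA,
      probReal_compl_eq_one_sub hA]
    exact le_mul_add_one_sub_mul hp measureReal_le_one hy

open MeasureTheory Filter in
/-- If `ℙ(X ≠ 0) > 0`, then the supremum over measurable positions `θ` of the expected
utility `E[U(r₀ + θ·X)]` is `+∞`: for every level `M` there is a measurable `θ` whose
expected utility is well defined (indeed the utility is integrable) and exceeds `M`.
Consequently, if this supremum is finite then `X = 0` almost surely. -/
theorem stmt_3 {Ω : Type*} [MeasurableSpace Ω] (ℙ : Measure Ω) [IsProbabilityMeasure ℙ]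
    (X : Ω → ℝ) (hXm : Measurable X) (hXne : 0 < ℙ {ω | X ω ≠ 0})
    (U : ℝ → ℝ) (hUmono : Monotone U) (hUtop : Tendsto U atTop atTop) (r₀ : ℝ) :
    ∀ M : ℝ, ∃ θ : Ω → ℝ, Measurable θ ∧
      Integrable (fun ω => U (r₀ + θ ω * X ω)) ℙ ∧
      M ≤ ∫ ω, U (r₀ + θ ω * X ω) ∂ℙ :=
  stmt_3_general ℙ X hXm hXne U hUtop r₀
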